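/- arXiv:2605.09772 — 2 statements merged into one kernel-verified Lean document; each statement's English description precedes it below -/
import Mathlib

section
/- One-step robust Lyapunov decrease (core of Theorem 1). Let x, x⁺ ∈ ℝⁿ, u ∈ ℝᵐ, λ ∈ (0,1), r ≥ 0, η ≥ 0, Δt ≥ 0, and set z = Ax + Bu + μ(x). Assume: (i) the residual envelope ‖g(x) − μ(x)‖ ≤ r; (ii) the discretization bound |V(x⁺) − V(Ax + Bu + g(x))| ≤ η·Δt²; and (iii) the tightened safety constraint V(z) − V(x) + 2·‖Pz‖·r + ‖P‖_op·r² + η·Δt² ≤ −λ·V(x). Then V(x⁺) ≤ (1 − λ)·V(x). -/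
open scoped RealInnerProductSpace

/-- One-step robust Lyapunov decrease (core of Theorem 1):
the tightened safety constraint, the residual envelope, and the discretization
bound together imply `V(x⁺) ≤ (1 − λ)·V(x)`. -/
theorem one_step_robust_lyapunov_decrease {n m : ℕ}
    (A : Matrix (Fin n) (Fin n) ℝ) (B : Matrix (Fin n) (Fin m) ℝ)
    (P : Matrix (Fin n) (Fin n) ℝ) (hP : P.PosDef)
    (g μ : EuclideanSpace ℝ (Fin n) → EuclideanSpace ℝ (Fin n))
    (lam r η Δt : ℝ) (hlam : lam ∈ Set.Ioo (0 : ℝ) 1)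
    (hr : 0 ≤ r) (hη : 0 ≤ η) (hΔt : 0 ≤ Δt)
    (x xplus : EuclideanSpace ℝ (Fin n)) (u : EuclideanSpace ℝ (Fin m))
    (z : EuclideanSpace ℝ (Fin n))
    (hz : z = Matrix.toEuclideanLin A x + Matrix.toEuclideanLin B u + μ x)
    (henv : ‖g x - μ x‖ ≤ r)
    (hdisc : |⟪xplus, Matrix.toEuclideanLin P xplus⟫
        - ⟪Matrix.toEuclideanLin A x + Matrix.toEuclideanLin B u + g x,
            Matrix.toEuclideanLin P
              (Matrix.toEuclideanLin A x + Matrix.toEuclideanLin B u + g x)⟫|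
      ≤ η * Δt ^ 2)
    (hsafe : ⟪z, Matrix.toEuclideanLin P z⟫ - ⟪x, Matrix.toEuclideanLin P x⟫
        + 2 * ‖Matrix.toEuclideanLin P z‖ * r
        + ‖Matrix.toEuclideanCLM (𝕜 := ℝ) P‖ * r ^ 2
        + η * Δt ^ 2
      ≤ -(lam * ⟪x, Matrix.toEuclideanLin P x⟫)) :
    ⟪xplus, Matrix.toEuclideanLin P xplus⟫
      ≤ (1 - lam) * ⟪x, Matrix.toEuclideanLin P x⟫ := by
  set T := Matrix.toEuclideanLin P with hT
  set e := g x - μ x with he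
  have hsym : LinearMap.IsSymmetric T := Matrix.isHermitian_iff_isSymmetric.mp hP.1
  have hzx : Matrix.toEuclideanLin A x + Matrix.toEuclideanLin B u + g x = z + e := by
    rw [hz, he]; abel
  -- expand V(z+e)
  have hexp : ⟪z + e, T (z + e)⟫ = ⟪z, T z⟫ + 2 * ⟪T z, e⟫ + ⟪e, T e⟫ := by
    rw [map_add, inner_add_left, inner_add_right, inner_add_right]
    have h1 : ⟪z, T e⟫ = ⟪T z, e⟫ := (hsym z e).symm
    have h2 : ⟪e, T z⟫ = ⟪T z, e⟫ := real_inner_comm _ _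
    rw [h1, h2]; ring
  have hcross : ⟪T z, e⟫ ≤ ‖T z‖ * r := by
    calc ⟪T z, e⟫ ≤ ‖T z‖ * ‖e‖ := real_inner_le_norm _ _
      _ ≤ ‖T z‖ * r := by
          exact mul_le_mul_of_nonneg_left henv (norm_nonneg _)
  have hTe : T e = Matrix.toEuclideanCLM (𝕜 := ℝ) P e := by
    rw [hT, ← Matrix.coe_toEuclideanCLM_eq_toEuclideanLin]; rfl
  have hquad : ⟪e, T e⟫ ≤ ‖Matrix.toEuclideanCLM (𝕜 := ℝ) P‖ * r ^ 2 := by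
    calc ⟪e, T e⟫ ≤ ‖e‖ * ‖T e‖ := real_inner_le_norm _ _
      _ ≤ ‖e‖ * (‖Matrix.toEuclideanCLM (𝕜 := ℝ) P‖ * ‖e‖) := by
          apply mul_le_mul_of_nonneg_left _ (norm_nonneg _)
          rw [hTe]; exact ContinuousLinearMap.le_opNorm _ _
      _ ≤ r * (‖Matrix.toEuclideanCLM (𝕜 := ℝ) P‖ * r) := by
          apply mul_le_mul henv _ (by positivity) hr
          exact mul_le_mul_of_nonneg_left henv (norm_nonneg _)
      _ = ‖Matrix.toEuclideanCLM (𝕜 := ℝ) P‖ * r ^ 2 := by ring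
  have hdisc' : ⟪xplus, T xplus⟫ ≤ ⟪z + e, T (z + e)⟫ + η * Δt ^ 2 := by
    rw [← hzx]
    have := (abs_le.mp hdisc).2
    linarith
  have : ⟪xplus, T xplus⟫ ≤ ⟪z, T z⟫ + 2 * ‖T z‖ * r
      + ‖Matrix.toEuclideanCLM (𝕜 := ℝ) P‖ * r ^ 2 + η * Δt ^ 2 := by
    rw [hexp] at hdisc'; linarith
  linarith
end

section
/- Continuous-time closed-loop safety under the PCIS constraint. Let λ ≥ 0, β ≥ 0, T > 0, let u : [0,T] → ℝᵐ, let g, μ : ℝⁿ → ℝⁿ and σ : ℝⁿ → ℝ with σ ≥ 0, and let x : [0,T] → ℝⁿ be differentiable with x′(t) = A x(t) + B u(t) + g(x(t)) for all t ∈ [0,T]. Suppose for every t ∈ [0,T]: (i) ‖g(x(t)) − μ(x(t))‖ ≤ β·σ(x(t)); and (ii) the PCIS constraint ⟨2P x(t), A x(t) + B u(t) + μ(x(t))⟩ + β·σ(x(t))·‖2P x(t)‖ + λ·V(x(t)) ≤ 0 holds. Then V(x(t)) ≤ e^{−λt}·V(x(0)) for all t ∈ [0,T]; in particular, if the sublevel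 set {x : V(x) ≤ V(x(0))} is contained in the state constraint set 𝒳, then x(t) ∈ 𝒳 for all t ∈ [0,T]. -/
open scoped RealInnerProductSpace

/-- Continuous-time closed-loop safety under the PCIS constraint:
if along the closed loop `x′ = Ax + Bu + g(x)` the GP envelope and the PCIS
constraint hold at every time, then `V(x(t)) ≤ e^{−λt}·V(x(0))`, and the
trajectory stays in any constraint set containing `{V ≤ V(x(0))}`. -/
theorem continuous_time_closed_loop_safety {n m : ℕ}
    (A : Matrix (Fin n) (Fin n) ℝ) (B : Matrix (Fin n) (Fin m) ℝ)
    (P : Matrix (Fin n) (Fin n) ℝ) (hP : P.PosDef)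
    (lam β T : ℝ) (hlam : 0 ≤ lam) (hβ : 0 ≤ β) (hT : 0 < T)
    (u : ℝ → EuclideanSpace ℝ (Fin m))
    (g μ : EuclideanSpace ℝ (Fin n) → EuclideanSpace ℝ (Fin n))
    (σ : EuclideanSpace ℝ (Fin n) → ℝ) (hσ : ∀ y, 0 ≤ σ y)
    (x : ℝ → EuclideanSpace ℝ (Fin n))
    (hode : ∀ t ∈ Set.Icc (0 : ℝ) T,
      HasDerivAt x
        (Matrix.toEuclideanLin A (x t) + Matrix.toEuclideanLin B (u t) + g (x t)) t)
    (henv : ∀ t ∈ Set.Icc (0 : ℝ) T, ‖g (x t) - μ (x t)‖ ≤ β * σ (x t))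
    (hpcis : ∀ t ∈ Set.Icc (0 : ℝ) T,
      ⟪(2 : ℝ) • (Matrix.toEuclideanLin P (x t)),
          Matrix.toEuclideanLin A (x t) + Matrix.toEuclideanLin B (u t) + μ (x t)⟫
        + β * σ (x t) * ‖(2 : ℝ) • (Matrix.toEuclideanLin P (x t))‖
        + lam * ⟪x t, Matrix.toEuclideanLin P (x t)⟫ ≤ 0) :
    (∀ t ∈ Set.Icc (0 : ℝ) T,
      ⟪x t, Matrix.toEuclideanLin P (x t)⟫
        ≤ Real.exp (-lam * t) * ⟪x 0, Matrix.toEuclideanLin P (x 0)⟫)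
    ∧ ∀ 𝒳 : Set (EuclideanSpace ℝ (Fin n)),
        {y : EuclideanSpace ℝ (Fin n) |
            ⟪y, Matrix.toEuclideanLin P y⟫ ≤ ⟪x 0, Matrix.toEuclideanLin P (x 0)⟫} ⊆ 𝒳 →
        ∀ t ∈ Set.Icc (0 : ℝ) T, x t ∈ 𝒳 := by
  set Pc : EuclideanSpace ℝ (Fin n) →L[ℝ] EuclideanSpace ℝ (Fin n) :=
    LinearMap.toContinuousLinearMap (Matrix.toEuclideanLin P) with hPc
  have hPcoe : ∀ y, Pc y = Matrix.toEuclideanLin P y := fun y => rfl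
  have hsym : LinearMap.IsSymmetric (Matrix.toEuclideanLin P) :=
    Matrix.isHermitian_iff_isSymmetric.mp hP.isHermitian
  set W : ℝ → ℝ := fun t => ⟪x t, Matrix.toEuclideanLin P (x t)⟫ with hWdef
  set v : ℝ → EuclideanSpace ℝ (Fin n) := fun t =>
    Matrix.toEuclideanLin A (x t) + Matrix.toEuclideanLin B (u t) + g (x t) with hvdef
  -- derivative of W
  have hWderiv : ∀ t ∈ Set.Icc (0 : ℝ) T,
      HasDerivAt W (2 * ⟪Matrix.toEuclideanLin P (x t), v t⟫) t := by
    intro t ht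
    have hx := hode t ht
    have hPx : HasDerivAt (fun s => Matrix.toEuclideanLin P (x s)) (Pc (v t)) t := by
      show HasDerivAt (fun s => Pc (x s)) (Pc (v t)) t
      simpa [Function.comp_def, hvdef, map_add] using (Pc.hasFDerivAt.comp_hasDerivAt t hx)
    have h := HasDerivAt.inner ℝ hx hPx
    have heq : ⟪x t, Pc (v t)⟫ + ⟪v t, Matrix.toEuclideanLin P (x t)⟫
        = 2 * ⟪Matrix.toEuclideanLin P (x t), v t⟫ := by
      rw [hPcoe, ← hsym (x t) (v t), real_inner_comm (v t)]
      ring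
    rw [heq] at h
    exact h
  -- derivative bound
  have hWbound : ∀ t ∈ Set.Icc (0 : ℝ) T,
      2 * ⟪Matrix.toEuclideanLin P (x t), v t⟫ ≤ -lam * W t := by
    intro t ht
    have key := hpcis t ht
    have henv' := henv t ht
    have hsplit : (2 : ℝ) * ⟪Matrix.toEuclideanLin P (x t), v t⟫
        = ⟪(2 : ℝ) • (Matrix.toEuclideanLin P (x t)),
            Matrix.toEuclideanLin A (x t) + Matrix.toEuclideanLin B (u t) + μ (x t)⟫
          + ⟪(2 : ℝ) • (Matrix.toEuclideanLin P (x t)), g (x t) - μ (x t)⟫ := by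
      rw [← inner_add_right]
      simp only [hvdef, real_inner_smul_left]
      congr 1
      congr 1
      abel
    have hcs : ⟪(2 : ℝ) • (Matrix.toEuclideanLin P (x t)), g (x t) - μ (x t)⟫
        ≤ ‖(2 : ℝ) • (Matrix.toEuclideanLin P (x t))‖ * (β * σ (x t)) := by
      calc ⟪(2 : ℝ) • (Matrix.toEuclideanLin P (x t)), g (x t) - μ (x t)⟫
          ≤ ‖(2 : ℝ) • (Matrix.toEuclideanLin P (x t))‖ * ‖g (x t) - μ (x t)‖ :=
            real_inner_le_norm _ _
        _ ≤ _ := by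
            apply mul_le_mul_of_nonneg_left henv' (norm_nonneg _)
    rw [hsplit]
    nlinarith [key]
  -- the function F = exp(lam t) * W t is antitone on [0, T]
  have hFderiv : ∀ t ∈ Set.Icc (0 : ℝ) T,
      HasDerivAt (fun s => Real.exp (lam * s) * W s)
        (lam * Real.exp (lam * t) * W t
          + Real.exp (lam * t) * (2 * ⟪Matrix.toEuclideanLin P (x t), v t⟫)) t := by
    intro t ht
    have hexp : HasDerivAt (fun s => Real.exp (lam * s)) (lam * Real.exp (lam * t)) t := by
      have h1 : HasDerivAt (fun s : ℝ => lam * s) lam t := by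
        simpa using (hasDerivAt_id t).const_mul lam
      simpa [mul_comm] using h1.exp
    exact hexp.mul (hWderiv t ht)
  have hanti : AntitoneOn (fun s => Real.exp (lam * s) * W s) (Set.Icc 0 T) := by
    apply antitoneOn_of_deriv_nonpos (convex_Icc 0 T)
    · intro t ht
      exact (hFderiv t ht).continuousAt.continuousWithinAt
    · intro t ht
      rw [interior_Icc] at ht
      exact (hFderiv t ⟨le_of_lt ht.1, le_of_lt ht.2⟩).differentiableAt.differentiableWithinAt
    · intro t ht
      rw [interior_Icc] at ht
      have ht' : t ∈ Set.Icc (0 : ℝ) T := ⟨le_of_lt ht.1, le_of_lt ht.2⟩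
      rw [(hFderiv t ht').deriv]
      have hb := hWbound t ht'
      have he : (0 : ℝ) < Real.exp (lam * t) := Real.exp_pos _
      nlinarith
  have main : ∀ t ∈ Set.Icc (0 : ℝ) T, W t ≤ Real.exp (-lam * t) * W 0 := by
    intro t ht
    have h0 : (0 : ℝ) ∈ Set.Icc (0 : ℝ) T := ⟨le_refl 0, le_of_lt hT⟩
    have := hanti h0 ht ht.1
    simp only [mul_zero, Real.exp_zero, one_mul] at this
    have he : (0 : ℝ) < Real.exp (lam * t) := Real.exp_pos _
    rw [neg_mul, Real.exp_neg, ← div_eq_inv_mul, le_div_iff₀ he, mul_comm]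
    exact this
  refine ⟨main, ?_⟩
  intro 𝒳 hsub t ht
  apply hsub
  have hW0 : 0 ≤ W 0 := by
    have := hP.posSemidef.re_dotProduct_nonneg ((WithLp.equiv 2 (Fin n → ℝ)) (x 0))
    simpa [hWdef, Matrix.toEuclideanLin_apply, PiLp.inner_apply, dotProduct,
      RCLike.star_def, mul_comm] using this
  have h1 : Real.exp (-lam * t) ≤ 1 := by
    apply Real.exp_le_one_iff.mpr
    nlinarith [ht.1]
  have := main t ht
  simp only [Set.mem_setOf_eq]
  calc W t ≤ Real.exp (-lam * t) * W 0 := this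
    _ ≤ 1 * W 0 := mul_le_mul_of_nonneg_right h1 hW0
    _ = W 0 := one_mul _
end
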